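/- For every real x ∈ (1, 2], each of the following three quantities is strictly less than 1: (−x² + 8x + 9)/(x² + 8x + 7), (−x² + 5x + 5)/(x² + 4x + 4), and (−x² + 6x + 7)/((x + 2)·√(x² + 8x + 7)); moreover at x = 2 the maximum of the three quantities equals 7/9, and arccos(7/9) > π/5. -/
import Mathlib

open Real

lemma sqrt27 : Real.sqrt 27 = 3 * Real.sqrt 3 := by
  rw [show (27:ℝ) = 3^2 * 3 by norm_num, Real.sqrt_mul (by positivity), Real.sqrt_sq (by norm_num)]

/-- the three extremal cosine values for a 4-0 type tetrahedron are
less than 1 on (1,2], their maximum at x = 2 equals 7/9, and arccos(7/9) > π/5. -/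
theorem stmt_19 :
    (∀ x : ℝ, 1 < x → x ≤ 2 →
      (-x ^ 2 + 8 * x + 9) / (x ^ 2 + 8 * x + 7) < 1 ∧
      (-x ^ 2 + 5 * x + 5) / (x ^ 2 + 4 * x + 4) < 1 ∧
      (-x ^ 2 + 6 * x + 7) / ((x + 2) * Real.sqrt (x ^ 2 + 8 * x + 7)) < 1) ∧
    max (max ((-(2:ℝ) ^ 2 + 8 * 2 + 9) / ((2:ℝ) ^ 2 + 8 * 2 + 7))
             ((-(2:ℝ) ^ 2 + 5 * 2 + 5) / ((2:ℝ) ^ 2 + 4 * 2 + 4)))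
        ((-(2:ℝ) ^ 2 + 6 * 2 + 7) / (((2:ℝ) + 2) * Real.sqrt ((2:ℝ) ^ 2 + 8 * 2 + 7)))
      = 7 / 9 ∧
    Real.arccos (7 / 9) > Real.pi / 5 := by
  have hs3 : Real.sqrt 3 > 1.7 := by
    have : (1.7:ℝ) = Real.sqrt (1.7^2) := by
      rw [Real.sqrt_sq]; norm_num
    rw [this]
    exact Real.sqrt_lt_sqrt (by positivity) (by norm_num)
  refine ⟨?_, ?_, ?_⟩
  · intro x hx1 hx2
    have h7 : (0:ℝ) < x ^ 2 + 8 * x + 7 := by nlinarith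
    refine ⟨by rw [div_lt_one h7]; nlinarith, ?_, ?_⟩
    · rw [div_lt_one (by nlinarith)]; nlinarith
    · have hsq : Real.sqrt (x ^ 2 + 8 * x + 7) > x + 2 := by
        have : x + 2 = Real.sqrt ((x+2)^2) := by
          rw [Real.sqrt_sq (by linarith)]
        rw [this]
        exact Real.sqrt_lt_sqrt (by positivity) (by nlinarith)
      have hden : (0:ℝ) < (x + 2) * Real.sqrt (x ^ 2 + 8 * x + 7) := by
        have := Real.sqrt_nonneg (x ^ 2 + 8 * x + 7); nlinarith
      rw [div_lt_one hden]
      have hsqsq : Real.sqrt (x ^ 2 + 8 * x + 7) ^ 2 = x ^ 2 + 8 * x + 7 :=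
        Real.sq_sqrt (le_of_lt h7)
      nlinarith [Real.sqrt_nonneg (x ^ 2 + 8 * x + 7),
        sq_nonneg (Real.sqrt (x ^ 2 + 8 * x + 7) - (x+2))]
  · rw [show ((2:ℝ) ^ 2 + 8 * 2 + 7) = 27 by norm_num, sqrt27]
    have h3 : (0:ℝ) < Real.sqrt 3 := by linarith
    have hc : (-(2:ℝ) ^ 2 + 6 * 2 + 7) / (((2:ℝ) + 2) * (3 * Real.sqrt 3)) ≤ 7 / 9 := by
      rw [div_le_div_iff₀ (by positivity) (by norm_num)]; nlinarith
    have hb : (-(2:ℝ) ^ 2 + 5 * 2 + 5) / ((2:ℝ) ^ 2 + 4 * 2 + 4) ≤ 7 / 9 := by norm_num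
    have ha : (-(2:ℝ) ^ 2 + 8 * 2 + 9) / 27 = (7:ℝ) / 9 := by norm_num
    rw [ha, max_eq_left hb, max_eq_left hc]
  · have hcos : Real.cos (π / 5) = (1 + Real.sqrt 5) / 4 := Real.cos_pi_div_five
    have hs5 : Real.sqrt 5 > 2.2 := by
      have : (2.2:ℝ) = Real.sqrt (2.2^2) := by rw [Real.sqrt_sq]; norm_num
      rw [this]; exact Real.sqrt_lt_sqrt (by positivity) (by norm_num)
    have h79 : (7:ℝ)/9 < Real.cos (π / 5) := by rw [hcos]; linarith
    have : π / 5 = Real.arccos (Real.cos (π / 5)) := by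
      rw [Real.arccos_cos (by positivity) (by linarith [Real.pi_pos])]
    rw [gt_iff_lt, this]
    have hs5b : Real.sqrt 5 < 3 := by
      rw [show (3:ℝ) = Real.sqrt (3^2) by rw [Real.sqrt_sq]; norm_num]
      exact Real.sqrt_lt_sqrt (by norm_num) (by norm_num)
    exact Real.strictAntiOn_arccos ⟨by norm_num, by norm_num⟩
      ⟨by linarith [Real.sqrt_nonneg 5], by linarith⟩ h79
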